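/- arXiv:1003.1592 — 2 statements merged into one kernel-verified Lean document; each statement's English description precedes it below -/
import Mathlib

section
/- For every n ≥ 1 there exists ε₀ > 0 such that for all 0 < ε < ε₀ and all 0 < δ ≤ 1, the set D = {η ∈ ℂ : Im η > 0, |η| < δ, |η|·exp(Re(1/η^(2n))) < ε} has exactly n connected components, and the k-th component is contained in the angular sector {η : kπ/n < arg η < (k+1)π/n} for k = 0, …, n-1. -/
/-!
Write `η = r e^{iθ}`. Then `‖η‖ exp (Re η^{-2n}) = r exp (cos (2nθ) / r^{2n})`. On the rays
`θ = jπ/n` the cosine is `1` and this is `≥ 1` for `r ≤ 1`, so for `ε < 1` the rays split the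
region into its parts in the `n` open sectors between them. Each part is connected: turning
the angle of a point towards the bisector `(2k+1)π/(2n)` of its sector only decreases the
cosine, and along the bisector, where the cosine is `-1`, `r ↦ r exp (-1/r^{2n})` is
increasing, so every point is joined inside the region to a fixed point on the bisector.
-/

open Real Set Complex Function

section OpenPartition

variable {X ι : Type*} [TopologicalSpace X] {D : Set X} {S : ι → Set X}

theorem ConnectedComponents.mk_eq_mk_iff_connectedComponentIn (a b : D) :
    ConnectedComponents.mk a = ConnectedComponents.mk b ↔
      connectedComponentIn D a = connectedComponentIn D b := by
  rw [ConnectedComponents.coe_eq_coe, connectedComponentIn_eq_image a.2,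
    connectedComponentIn_eq_image b.2, Subtype.val_injective.image_injective.eq_iff]

theorem connectedComponentIn_eq_inter_of_isOpen_cover (hS : ∀ i, IsOpen (S i))
    (hdisj : Pairwise (Disjoint on S)) (hcover : D ⊆ ⋃ i, S i)
    (hconn : ∀ i, IsPreconnected (D ∩ S i)) {x : X} {i : ι} (hx : x ∈ D ∩ S i) :
    connectedComponentIn D x = D ∩ S i := by
  refine subset_antisymm (subset_inter (connectedComponentIn_subset D x) ?_)
    ((hconn i).subset_connectedComponentIn hx inter_subset_left)
  have hrest : Disjoint (S i) (⋃ (j) (_ : j ≠ i), S j) :=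
    disjoint_iUnion₂_right.2 fun j hj => hdisj (Ne.symm hj)
  refine isPreconnected_connectedComponentIn.subset_left_of_subset_union (hS i)
    (isOpen_biUnion fun j _ => hS j) hrest ?_ ⟨x, mem_connectedComponentIn hx.1, hx.2⟩
  intro y hy
  obtain ⟨j, hj⟩ := mem_iUnion.1 (hcover (connectedComponentIn_subset D x hy))
  by_cases hji : j = i
  · exact Or.inl (hji ▸ hj)
  · exact Or.inr (mem_iUnion₂.2 ⟨j, hji, hj⟩)

theorem Nat.card_connectedComponents_eq_of_isOpen_cover (hS : ∀ i, IsOpen (S i))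
    (hdisj : Pairwise (Disjoint on S)) (hcover : D ⊆ ⋃ i, S i)
    (hconn : ∀ i, IsPreconnected (D ∩ S i)) (hne : ∀ i, (D ∩ S i).Nonempty) :
    Nat.card (ConnectedComponents D) = Nat.card ι := by
  choose x hx using hne
  have hcomp : ∀ {y i}, y ∈ D ∩ S i → connectedComponentIn D y = D ∩ S i :=
    connectedComponentIn_eq_inter_of_isOpen_cover hS hdisj hcover hconn
  let f : ι → ConnectedComponents D := fun i => ConnectedComponents.mk ⟨x i, (hx i).1⟩
  have hf : Bijective f := by
    refine ⟨fun i j hij => ?_, fun c => ?_⟩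
    · rw [ConnectedComponents.mk_eq_mk_iff_connectedComponentIn, hcomp (hx i),
        hcomp (hx j)] at hij
      by_contra hne
      exact (hdisj hne).le_bot ⟨(hx i).2, (hij ▸ hx i).2⟩
    · obtain ⟨y, rfl⟩ := ConnectedComponents.surjective_coe c
      obtain ⟨i, hi⟩ := mem_iUnion.1 (hcover y.2)
      refine ⟨i, (ConnectedComponents.mk_eq_mk_iff_connectedComponentIn _ _).2 ?_⟩
      rw [hcomp (hx i), hcomp ⟨y.2, hi⟩]
  exact (Nat.card_eq_of_bijective f hf).symm

end OpenPartition

theorem Complex.re_one_div_pow (η : ℂ) (m : ℕ) :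
    (1 / η ^ m).re = Real.cos (m * arg η) / ‖η‖ ^ m := by
  conv_lhs => rw [← norm_mul_exp_arg_mul_I η]
  rw [mul_pow, ← Complex.exp_nat_mul, one_div, mul_inv, ← Complex.exp_neg, ← ofReal_pow,
    ← ofReal_inv, re_ofReal_mul,
    show -(↑m * (↑(arg η) * I)) = ↑(-(m * arg η)) * I by push_cast; ring,
    exp_ofReal_mul_I_re, Real.cos_neg, div_eq_inv_mul]

theorem Complex.arg_ofReal_mul_exp_mul_I {r θ : ℝ} (hr : 0 < r) (hθ : θ ∈ Ioc (-π) π) :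
    arg ((r : ℂ) * exp (θ * I)) = θ := by
  rw [exp_mul_I, arg_mul_cos_add_sin_mul_I hr hθ]

theorem Complex.im_pos_iff_arg_mem_Ioo {z : ℂ} : 0 < z.im ↔ arg z ∈ Ioo 0 π := by
  refine ⟨fun h => ⟨(arg_nonneg_iff.2 h.le).lt_of_ne fun h0 => ?_, arg_lt_pi_iff.2 (.inr h.ne')⟩,
    fun h => ?_⟩
  · exact h.ne' (arg_eq_zero_iff.1 h0.symm).2
  · have hz : z ≠ 0 := by rintro rfl; simp at h
    rw [← norm_mul_sin_arg]
    exact mul_pos (norm_pos_iff.2 hz) (Real.sin_pos_of_pos_of_lt_pi h.1 h.2)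

theorem Real.cos_le_cos_of_abs_sub_odd_mul_pi_le {x y : ℝ} (k : ℕ)
    (hx : |x - (2 * k + 1) * π| ≤ π) (hyx : |y - (2 * k + 1) * π| ≤ |x - (2 * k + 1) * π|) :
    Real.cos y ≤ Real.cos x := by
  have hcos : ∀ z, Real.cos z = -Real.cos |z - (2 * k + 1) * π| := fun z => by
    rw [Real.cos_abs, ← Real.cos_add_pi, show z - (2 * k + 1) * π + π = z - k * (2 * π) by ring,
      Real.cos_sub_nat_mul_two_pi]
  rw [hcos x, hcos y, neg_le_neg_iff]
  exact Real.cos_le_cos_of_nonneg_of_le_pi (abs_nonneg _) hx hyx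

theorem one_le_mul_exp_one_div_pow {r : ℝ} {m : ℕ} (hm : m ≠ 0) (hr0 : 0 < r) (hr1 : r ≤ 1) :
    1 ≤ r * Real.exp (1 / r ^ m) :=
  calc 1 = r * (1 / r) := by field_simp
    _ ≤ r * (1 / r ^ m) := by
      gcongr
      exact pow_le_of_le_one hr0.le hr1 hm
    _ ≤ r * Real.exp (1 / r ^ m) := by
      gcongr
      linarith [Real.add_one_le_exp (1 / r ^ m)]

theorem monotoneOn_mul_exp_div_pow {c : ℝ} (hc : c ≤ 0) (m : ℕ) :
    MonotoneOn (fun r : ℝ => r * Real.exp (c / r ^ m)) (Ioi 0) := by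
  intro s hs r hr hsr
  have hexp : c / s ^ m ≤ c / r ^ m := by
    rw [div_le_div_iff₀ (pow_pos hs m) (pow_pos hr m)]
    exact mul_le_mul_of_nonpos_left (pow_le_pow_left₀ (le_of_lt hs) hsr m) hc
  exact mul_le_mul hsr (Real.exp_le_exp.2 hexp) (Real.exp_pos _).le (le_of_lt hr)

theorem exists_lt_mem_Ico_mul_pi_div {n : ℕ} (hn : n ≠ 0) {θ : ℝ} (h0 : 0 ≤ θ) (hπ : θ < π) :
    ∃ k < n, (k : ℝ) * π / n ≤ θ ∧ θ < (k + 1) * π / n := by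
  have hn' : (0 : ℝ) < n := by positivity
  have hx : 0 ≤ θ * n / π := by positivity
  refine ⟨⌊θ * n / π⌋₊, ?_, ?_, ?_⟩
  · rw [Nat.floor_lt hx, div_lt_iff₀ pi_pos]
    nlinarith
  · rw [div_le_iff₀ hn', ← le_div_iff₀ pi_pos]
    exact Nat.floor_le hx
  · rw [lt_div_iff₀ hn', ← div_lt_iff₀ pi_pos]
    exact Nat.lt_floor_add_one _

def petalRegion (n : ℕ) (δ ε : ℝ) : Set ℂ :=
  {η : ℂ | 0 < η.im ∧ ‖η‖ < δ ∧ ‖η‖ * Real.exp ((1 / η ^ (2 * n)).re) < ε}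

def sector (n k : ℕ) : Set ℂ := arg ⁻¹' Ioo (k * π / n) ((k + 1) * π / n)

noncomputable def bisector (n k : ℕ) : ℝ := (2 * k + 1) * π / (2 * n)

noncomputable def polarProfile (n : ℕ) (r θ : ℝ) : ℝ :=
  r * Real.exp (Real.cos (2 * n * θ) / r ^ (2 * n))

theorem norm_mul_exp_re_one_div_pow (n : ℕ) (η : ℂ) :
    ‖η‖ * Real.exp ((1 / η ^ (2 * n)).re) = polarProfile n ‖η‖ (arg η) := by
  rw [re_one_div_pow, polarProfile]
  push_cast
  rfl

section Sector

variable {n k : ℕ}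

theorem Ioo_mul_pi_div_subset_Ioo_zero_pi (hk : k < n) :
    Ioo ((k : ℝ) * π / n) ((k + 1) * π / n) ⊆ Ioo 0 π := by
  have hn : (0 : ℝ) < n := Nat.cast_pos.2 hk.pos
  have hkn : (k : ℝ) + 1 ≤ n := by exact_mod_cast hk
  refine Ioo_subset_Ioo (by positivity) ?_
  rw [div_le_iff₀ hn]
  nlinarith [pi_pos]

theorem mem_Ioo_iff_abs_sub_bisector_lt (hn : n ≠ 0) {θ : ℝ} :
    θ ∈ Ioo ((k : ℝ) * π / n) ((k + 1) * π / n) ↔ |θ - bisector n k| < π / (2 * n) := by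
  have hlo : bisector n k - π / (2 * n) = k * π / n := by
    unfold bisector; field_simp; ring
  have hhi : bisector n k + π / (2 * n) = (k + 1) * π / n := by
    unfold bisector; field_simp; ring
  rw [abs_sub_lt_iff, mem_Ioo, ← hlo, ← hhi]
  constructor <;> rintro ⟨h1, h2⟩ <;> constructor <;> linarith

theorem cos_two_mul_bisector (hn : n ≠ 0) : Real.cos (2 * n * bisector n k) = -1 := by
  rw [bisector, show 2 * (n : ℝ) * ((2 * k + 1) * π / (2 * n)) = π + k * (2 * π) by
    field_simp; ring, Real.cos_add_nat_mul_two_pi, Real.cos_pi]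

theorem sector_subset_upperHalfPlane (hk : k < n) : sector n k ⊆ {z : ℂ | 0 < z.im} :=
  fun _ hz => im_pos_iff_arg_mem_Ioo.2 (Ioo_mul_pi_div_subset_Ioo_zero_pi hk hz)

theorem isOpen_sector (hk : k < n) : IsOpen (sector n k) := by
  have hslit : sector n k ⊆ slitPlane := fun z hz =>
    mem_slitPlane_iff.2 (.inr (sector_subset_upperHalfPlane hk hz).ne')
  rw [← inter_eq_right.2 hslit]
  exact continuousOn_arg.isOpen_inter_preimage isOpen_slitPlane isOpen_Ioo

theorem pairwise_disjoint_sector (n : ℕ) : Pairwise (Disjoint on sector n) := by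
  have key : ∀ {j k : ℕ}, j < k → Disjoint (sector n j) (sector n k) := fun {j k} hjk => by
    have hle : ((j : ℝ) + 1) * π / n ≤ k * π / n := by gcongr; exact_mod_cast hjk
    exact disjoint_left.2 fun z hj hk => (hj.2.trans_le hle).not_gt hk.1
  intro j k hjk
  rcases hjk.lt_or_gt with h | h
  · exact key h
  · exact (key h).symm

end Sector

section Profile

variable {n k : ℕ} {r θ θ' : ℝ}

theorem polarProfile_le_polarProfile (hn : n ≠ 0) (hr : 0 ≤ r)
    (hθ : |θ - bisector n k| ≤ π / (2 * n)) (hθ' : |θ' - bisector n k| ≤ |θ - bisector n k|) :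
    polarProfile n r θ' ≤ polarProfile n r θ := by
  have hn' : (0 : ℝ) < n := by positivity
  have hdev : ∀ φ, |2 * n * φ - (2 * k + 1) * π| = 2 * n * |φ - bisector n k| := fun φ => by
    rw [show 2 * n * φ - (2 * k + 1) * π = 2 * n * (φ - bisector n k) by
      unfold bisector; field_simp, abs_mul, abs_of_pos (by positivity)]
  have hcos : Real.cos (2 * n * θ') ≤ Real.cos (2 * n * θ) := by
    refine Real.cos_le_cos_of_abs_sub_odd_mul_pi_le k ?_ ?_ <;> simp only [hdev]
    · calc 2 * n * |θ - bisector n k| ≤ 2 * n * (π / (2 * n)) := by gcongr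
        _ = π := by field_simp
    · gcongr
  unfold polarProfile
  gcongr

theorem one_le_polarProfile_nat_mul_pi_div (hn : n ≠ 0) (hr0 : 0 < r) (hr1 : r ≤ 1) (j : ℕ) :
    1 ≤ polarProfile n r (j * π / n) := by
  rw [polarProfile, show 2 * (n : ℝ) * (j * π / n) = j * (2 * π) by field_simp,
    Real.cos_nat_mul_two_pi]
  exact one_le_mul_exp_one_div_pow (by positivity) hr0 hr1

theorem monotoneOn_polarProfile_bisector (hn : n ≠ 0) :
    MonotoneOn (fun r => polarProfile n r (bisector n k)) (Ioi 0) := by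
  simp only [polarProfile, cos_two_mul_bisector hn]
  exact monotoneOn_mul_exp_div_pow (by norm_num) _

theorem polarProfile_bisector_le (hn : n ≠ 0) (hr : 0 ≤ r) :
    polarProfile n r (bisector n k) ≤ r := by
  rw [polarProfile, cos_two_mul_bisector hn]
  refine mul_le_of_le_one_right hr (Real.exp_le_one_iff.2 ?_)
  exact div_nonpos_of_nonpos_of_nonneg (by norm_num) (by positivity)

end Profile

section Region

variable {n k : ℕ} {δ ε : ℝ}

theorem mem_petalRegion_inter_sector_iff (hk : k < n) {η : ℂ} :
    η ∈ petalRegion n δ ε ∩ sector n k ↔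
      0 < ‖η‖ ∧ ‖η‖ < δ ∧ |arg η - bisector n k| < π / (2 * n) ∧
        polarProfile n ‖η‖ (arg η) < ε := by
  rw [← mem_Ioo_iff_abs_sub_bisector_lt (Nat.ne_zero_of_lt hk), ← norm_mul_exp_re_one_div_pow]
  refine ⟨fun ⟨⟨him, hδ, hε⟩, hsec⟩ => ⟨?_, hδ, hsec, hε⟩,
    fun ⟨_, hδ, hsec, hε⟩ => ⟨⟨sector_subset_upperHalfPlane hk hsec, hδ, hε⟩, hsec⟩⟩
  exact norm_pos_iff.2 fun h => by simp [h] at him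

theorem ofReal_mul_exp_mem_petalRegion_inter_sector (hk : k < n) {r θ : ℝ} (hr : 0 < r)
    (hrδ : r < δ) (hθ : |θ - bisector n k| < π / (2 * n)) (hprofile : polarProfile n r θ < ε) :
    (r : ℂ) * exp (θ * I) ∈ petalRegion n δ ε ∩ sector n k := by
  have hθπ := Ioo_mul_pi_div_subset_Ioo_zero_pi hk
    ((mem_Ioo_iff_abs_sub_bisector_lt (Nat.ne_zero_of_lt hk)).2 hθ)
  have hnorm : ‖(r : ℂ) * exp (θ * I)‖ = r := by simp [hr.le]
  rw [mem_petalRegion_inter_sector_iff hk, hnorm,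
    arg_ofReal_mul_exp_mul_I hr ⟨by linarith [hθπ.1, pi_pos], hθπ.2.le⟩]
  exact ⟨hr, hrδ, hθ, hprofile⟩

theorem ofReal_mul_exp_bisector_mem_petalRegion_inter_sector (hk : k < n) {r : ℝ} (hr : 0 < r)
    (hrδ : r < δ) (hprofile : polarProfile n r (bisector n k) < ε) :
    (r : ℂ) * exp (bisector n k * I) ∈ petalRegion n δ ε ∩ sector n k := by
  have : (0 : ℝ) < n := Nat.cast_pos.2 hk.pos
  refine ofReal_mul_exp_mem_petalRegion_inter_sector hk hr hrδ ?_ hprofile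
  rw [sub_self, abs_zero]
  positivity

theorem petalRegion_inter_sector_nonempty (hk : k < n) (hδ : 0 < δ) (hε : 0 < ε) :
    (petalRegion n δ ε ∩ sector n k).Nonempty := by
  obtain ⟨r, hr, hrδε⟩ := exists_between (lt_min hδ hε)
  have hrε : polarProfile n r (bisector n k) < ε :=
    (polarProfile_bisector_le (Nat.ne_zero_of_lt hk) hr.le).trans_lt
      (hrδε.trans_le (min_le_right δ ε))
  exact ⟨_, ofReal_mul_exp_bisector_mem_petalRegion_inter_sector hk hr
    (hrδε.trans_le (min_le_left δ ε)) hrε⟩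

theorem isPreconnected_petalRegion_inter_sector (hk : k < n) (hδ : 0 < δ) (hε : 0 < ε) :
    IsPreconnected (petalRegion n δ ε ∩ sector n k) := by
  have hn := Nat.ne_zero_of_lt hk
  set c := bisector n k
  obtain ⟨r₀, hr₀, hr₀δε⟩ := exists_between (lt_min hδ hε)
  have hr₀δ : r₀ < δ := hr₀δε.trans_le (min_le_left δ ε)
  have hr₀ε : polarProfile n r₀ c < ε :=
    (polarProfile_bisector_le hn hr₀.le).trans_lt (hr₀δε.trans_le (min_le_right δ ε))
  refine isPreconnected_of_forall ((r₀ : ℂ) * exp (c * I)) fun y hy => ?_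
  obtain ⟨hr, hrδ, hθ, hyε⟩ := (mem_petalRegion_inter_sector_iff hk).1 hy
  set r := ‖y‖
  set θ := arg y
  have hcθ : |c - c| ≤ |θ - c| := by simp
  let arc := (fun t : ℝ => (r : ℂ) * exp (t * I)) '' uIcc θ c
  let seg := (fun s : ℝ => (s : ℂ) * exp (c * I)) '' uIcc r₀ r
  have harc : arc ⊆ petalRegion n δ ε ∩ sector n k := by
    rintro _ ⟨t, ht, rfl⟩
    have htc : |t - c| ≤ |θ - c| := by
      simpa only [abs_sub_comm] using abs_sub_right_of_mem_uIcc ht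
    exact ofReal_mul_exp_mem_petalRegion_inter_sector hk hr hrδ (htc.trans_lt hθ)
      ((polarProfile_le_polarProfile hn hr.le hθ.le htc).trans_lt hyε)
  have hrc : polarProfile n r c < ε :=
    (polarProfile_le_polarProfile hn hr.le hθ.le hcθ).trans_lt hyε
  have hseg : seg ⊆ petalRegion n δ ε ∩ sector n k := by
    rintro _ ⟨s, hs, rfl⟩
    rcases mem_uIcc.1 hs with ⟨hr₀s, hsr⟩ | ⟨hrs, hsr₀⟩
    · have hs0 := hr₀.trans_le hr₀s
      exact ofReal_mul_exp_bisector_mem_petalRegion_inter_sector hk hs0 (hsr.trans_lt hrδ)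
        ((monotoneOn_polarProfile_bisector hn hs0 hr hsr).trans_lt hrc)
    · have hs0 := hr.trans_le hrs
      exact ofReal_mul_exp_bisector_mem_petalRegion_inter_sector hk hs0 (hsr₀.trans_lt hr₀δ)
        ((monotoneOn_polarProfile_bisector hn hs0 hr₀ hsr₀).trans_lt hr₀ε)
  refine ⟨arc ∪ seg, union_subset harc hseg, .inr ⟨r₀, left_mem_uIcc, rfl⟩,
    .inl ⟨θ, left_mem_uIcc, norm_mul_exp_arg_mul_I y⟩, ?_⟩
  exact (isPreconnected_uIcc.image _ (by fun_prop)).union ((r : ℂ) * exp (c * I))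
    ⟨c, right_mem_uIcc, rfl⟩ ⟨r, right_mem_uIcc, rfl⟩ (isPreconnected_uIcc.image _ (by fun_prop))

theorem petalRegion_subset_iUnion_sector (hn : n ≠ 0) (hδ : δ ≤ 1) (hε : ε ≤ 1) :
    petalRegion n δ ε ⊆ ⋃ k : Fin n, sector n k := by
  rintro η ⟨him, hηδ, hηε⟩
  have harg := im_pos_iff_arg_mem_Ioo.1 him
  have hr : 0 < ‖η‖ := norm_pos_iff.2 fun h => by simp [h] at him
  obtain ⟨k, hk, hlo, hhi⟩ := exists_lt_mem_Ico_mul_pi_div hn harg.1.le harg.2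
  refine mem_iUnion.2 ⟨⟨k, hk⟩, lt_of_le_of_ne hlo fun hray => ?_, hhi⟩
  rw [norm_mul_exp_re_one_div_pow, ← hray] at hηε
  exact (one_le_polarProfile_nat_mul_pi_div hn hr (hηδ.le.trans hδ) k).not_gt (hηε.trans_le hε)

end Region

theorem stmt14 (n : ℕ) (hn : 1 ≤ n) :
    ∃ ε₀ > 0, ∀ ε : ℝ, 0 < ε → ε < ε₀ → ∀ δ : ℝ, 0 < δ → δ ≤ 1 →
      ∀ D : Set ℂ,
        D = {η : ℂ | 0 < η.im ∧ ‖η‖ < δ ∧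
              ‖η‖ * Real.exp ((1 / η ^ (2 * n)).re) < ε} →
        Nat.card (ConnectedComponents D) = n ∧
        ∀ x ∈ D, ∃ k : ℕ, k < n ∧
          connectedComponentIn D x ⊆
            {η : ℂ | k * π / n < Complex.arg η ∧ Complex.arg η < (k + 1) * π / n} := by
  refine ⟨1, one_pos, fun ε hε hε1 δ hδ hδ1 D hD => ?_⟩
  obtain rfl : D = petalRegion n δ ε := hD
  have hopen : ∀ k : Fin n, IsOpen (sector n k) := fun k => isOpen_sector k.2
  have hdisj : Pairwise (Disjoint on fun k : Fin n => sector n k) :=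
    (pairwise_disjoint_sector n).comp_of_injective Fin.val_injective
  have hcover := petalRegion_subset_iUnion_sector (Nat.one_le_iff_ne_zero.1 hn) hδ1 hε1.le
  have hconn : ∀ k : Fin n, IsPreconnected (petalRegion n δ ε ∩ sector n k) :=
    fun k => isPreconnected_petalRegion_inter_sector k.2 hδ hε
  refine ⟨?_, fun x hx => ?_⟩
  · rw [Nat.card_connectedComponents_eq_of_isOpen_cover hopen hdisj hcover hconn
      fun k => petalRegion_inter_sector_nonempty k.2 hδ hε, Nat.card_fin]
  · obtain ⟨k, hk⟩ := mem_iUnion.1 (hcover hx)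
    exact ⟨k, k.2, (connectedComponentIn_eq_inter_of_isOpen_cover hopen hdisj hcover hconn
      ⟨hx, hk⟩).trans_subset inter_subset_right⟩
end

section
/- Let D ⊂ ℂ be the open unit disc and U ⊂ ℂ open. Let G : D × U → ℂ be such that (i) z ↦ G(c, z) is holomorphic on U for every c ∈ D, (ii) c ↦ G(c, z) is continuous on D for every z ∈ U, and (iii) there is a nonempty open subset V ⊂ U such that c ↦ G(c, z) is holomorphic on D for every z ∈ V. If U is connected, then c ↦ G(c, z) is holomorphic on D for every z ∈ U. -/
/-!
Fix `c₀ ∈ D` and a closed disc `closedBall c₀ r ⊆ D`. For `c` inside this disc, both `G c` and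
`z ↦ (2πi)⁻¹ ∮_{|ζ - c₀| = r} (ζ - c)⁻¹ G(ζ, z) dζ` are holomorphic on `U` (the latter by
differentiating under the integral sign, the domination coming from Cauchy estimates in `z`).
They agree on `V` by the Cauchy integral formula for the holomorphic functions `G(·, z)`, `z ∈ V`,
hence on all of `U` by the identity theorem. Thus near `c₀` every `c ↦ G(c, z)`, `z ∈ U`, is the
Cauchy integral of a continuous function on a circle, which is holomorphic inside it.
-/

open Set Complex Metric Filter MeasureTheory Function Topology Real Interval

section

variable {E : Type*} [NormedAddCommGroup E] [NormedSpace ℂ E]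

lemma aestronglyMeasurable_deriv_of_aestronglyMeasurable {α : Type*} [MeasurableSpace α]
    {μ : Measure α} {F : ℂ → α → E} {s : Set ℂ} {z₀ : ℂ} (hs : s ∈ 𝓝 z₀)
    (hF : ∀ z ∈ s, AEStronglyMeasurable (F z) μ)
    (hd : ∀ᵐ t ∂μ, DifferentiableAt ℂ (F · t) z₀) :
    AEStronglyMeasurable (fun t => deriv (F · t) z₀) μ := by
  obtain ⟨u, hu⟩ := exists_seq_tendsto (𝓝[≠] z₀)
  obtain ⟨N, hN⟩ := (hu.eventually (mem_nhdsWithin_of_mem_nhds hs)).exists_forall_of_atTop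
  have hslope : ∀ n, AEStronglyMeasurable (fun t => slope (F · t) z₀ (u (n + N))) μ := fun n => by
    simp only [slope_def_module]
    exact ((hF _ (hN _ (Nat.le_add_left N n))).sub (hF z₀ (mem_of_mem_nhds hs))).const_smul _
  refine aestronglyMeasurable_of_tendsto_ae atTop hslope ?_
  filter_upwards [hd] with t ht
  exact (hasDerivAt_iff_tendsto_slope.1 ht.hasDerivAt).comp (hu.comp (tendsto_add_atTop_nat N))

lemma norm_deriv_le_of_mem_ball {f : ℂ → E} {z₀ z : ℂ} {r M : ℝ} (hr : 0 < r)
    (hf : DifferentiableOn ℂ f (closedBall z₀ (2 * r)))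
    (hM : ∀ w ∈ closedBall z₀ (2 * r), ‖f w‖ ≤ M) (hz : z ∈ ball z₀ r) :
    ‖deriv f z‖ ≤ M / r := by
  have hsub : closedBall z r ⊆ closedBall z₀ (2 * r) :=
    closedBall_subset_closedBall' (by linarith [mem_ball.1 hz])
  exact norm_deriv_le_of_forall_mem_sphere_norm_le hr
    ((hf.mono (closure_ball_subset_closedBall.trans hsub)).diffContOnCl)
    fun w hw => hM w (hsub (sphere_subset_closedBall hw))

theorem differentiableOn_intervalIntegral {F : ℂ → ℝ → E} {s : Set ℂ} {a b : ℝ} (hs : IsOpen s)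
    (hF : ContinuousOn (uncurry F) (s ×ˢ [[a, b]]))
    (hFd : ∀ t ∈ [[a, b]], DifferentiableOn ℂ (F · t) s) :
    DifferentiableOn ℂ (fun z => ∫ t in a..b, F z t) s := by
  intro z₀ hz₀
  obtain ⟨r, hr, hrs⟩ : ∃ r > 0, closedBall z₀ (2 * r) ⊆ s := by
    obtain ⟨ε, hε, hεs⟩ := nhds_basis_closedBall.mem_iff.1 (hs.mem_nhds hz₀)
    exact ⟨ε / 2, half_pos hε, by rwa [mul_div_cancel₀ ε two_ne_zero]⟩
  obtain ⟨M, hM⟩ := ((isCompact_closedBall z₀ (2 * r)).prod isCompact_uIcc)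
    |>.exists_bound_of_continuousOn (hF.mono (prod_mono hrs Subset.rfl))
  have hballs : ball z₀ r ⊆ s := (ball_subset_closedBall.trans
    (closedBall_subset_closedBall (by linarith))).trans hrs
  have hFt : ∀ z ∈ s, ContinuousOn (F z) [[a, b]] := fun z hz =>
    hF.comp (Continuous.continuousOn (by fun_prop)) fun t ht => mk_mem_prod hz ht
  have hmeas : ∀ z ∈ s, AEStronglyMeasurable (F z) (volume.restrict (Ι a b)) := fun z hz =>
    ((hFt z hz).mono uIoc_subset_uIcc).aestronglyMeasurable measurableSet_uIoc
  have hderiv : ∀ t ∈ Ι a b, ∀ z ∈ ball z₀ r, HasDerivAt (F · t) (deriv (F · t) z) z :=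
    fun t ht z hz => ((hFd t (uIoc_subset_uIcc ht)).differentiableAt
      (hs.mem_nhds (hballs hz))).hasDerivAt
  have hbound : ∀ t ∈ Ι a b, ∀ z ∈ ball z₀ r, ‖deriv (F · t) z‖ ≤ M / r :=
    fun t ht z hz => norm_deriv_le_of_mem_ball hr ((hFd t (uIoc_subset_uIcc ht)).mono hrs)
      (fun w hw => hM (w, t) ⟨hw, uIoc_subset_uIcc ht⟩) hz
  have hF'meas : AEStronglyMeasurable (fun t => deriv (F · t) z₀) (volume.restrict (Ι a b)) :=
    aestronglyMeasurable_deriv_of_aestronglyMeasurable (hs.mem_nhds hz₀) hmeas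
      ((ae_restrict_iff' measurableSet_uIoc).2 (ae_of_all _ fun t ht =>
        (hderiv t ht z₀ (mem_ball_self hr)).differentiableAt))
  exact (intervalIntegral.hasDerivAt_integral_of_dominated_loc_of_deriv_le (ball_mem_nhds z₀ hr)
    (eventually_of_mem (hs.mem_nhds hz₀) hmeas) ((hFt z₀ hz₀).intervalIntegrable) hF'meas
    (ae_of_all _ hbound) intervalIntegrable_const
    (ae_of_all _ hderiv)).2.differentiableAt.differentiableWithinAt

theorem differentiableOn_circleIntegral {K : ℂ → ℂ → E} {c : ℂ} {R : ℝ} {s : Set ℂ}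
    (hR : 0 ≤ R) (hs : IsOpen s) (hK : ContinuousOn (uncurry K) (sphere c R ×ˢ s))
    (hKd : ∀ ζ ∈ sphere c R, DifferentiableOn ℂ (K ζ) s) :
    DifferentiableOn ℂ (fun z => ∮ ζ in C(c, R), K ζ z) s := by
  refine differentiableOn_intervalIntegral hs ?_ fun θ _ =>
    (hKd _ (circleMap_mem_sphere c hR θ)).const_smul _
  simp only [deriv_circleMap]
  exact (Continuous.continuousOn (by fun_prop)).smul
    (hK.comp (f := fun p : ℂ × ℝ => (circleMap c R p.2, p.1))
      (Continuous.continuousOn (by fun_prop)) fun p hp => ⟨circleMap_mem_sphere c hR _, hp.1⟩)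

variable [CompleteSpace E]

lemma differentiableOn_cauchyIntegral {f : ℂ → E} {c : ℂ} {R : ℝ} (hf : CircleIntegrable f c R)
    (hR : 0 < R) :
    DifferentiableOn ℂ (fun w => (2 * π * I : ℂ)⁻¹ • ∮ z in C(c, R), (z - w)⁻¹ • f z)
      (ball c R) := by
  lift R to NNReal using hR.le
  simpa only [eball_coe] using
    (hasFPowerSeriesOn_cauchy_integral hf (by exact_mod_cast hR)).differentiableOn

variable {D U V : Set ℂ} {G : ℂ → ℂ → E}

lemma eqOn_cauchyIntegral_of_isPreconnected (hU : IsOpen U) (hUc : IsPreconnected U)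
    (hV : IsOpen V) (hVne : V.Nonempty) (hVU : V ⊆ U)
    (hcont : ContinuousOn (uncurry G) (D ×ˢ U)) (hholz : ∀ c ∈ D, DifferentiableOn ℂ (G c) U)
    (hholc : ∀ z ∈ V, DifferentiableOn ℂ (G · z) D) {c₀ c : ℂ} {r : ℝ}
    (hr : closedBall c₀ r ⊆ D) (hc : c ∈ ball c₀ r) :
    EqOn (G c) (fun z => (2 * π * I : ℂ)⁻¹ • ∮ ζ in C(c₀, r), (ζ - c)⁻¹ • G ζ z) U := by
  have hsphere : sphere c₀ r ⊆ D := sphere_subset_closedBall.trans hr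
  have hne : ∀ ζ ∈ sphere c₀ r, ζ - c ≠ 0 := fun ζ hζ =>
    sub_ne_zero.2 (sphere_disjoint_ball.ne_of_mem hζ hc)
  have hcauchy : DifferentiableOn ℂ (fun z => ∮ ζ in C(c₀, r), (ζ - c)⁻¹ • G ζ z) U := by
    refine differentiableOn_circleIntegral (dist_nonneg.trans (mem_ball.1 hc).le) hU ?_
      fun ζ hζ => (hholz ζ (hsphere hζ)).const_smul _
    exact ((continuous_fst.sub continuous_const).continuousOn.inv₀ fun p hp => hne p.1 hp.1).smul
      (hcont.mono (prod_mono hsphere Subset.rfl))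
  obtain ⟨v, hv⟩ := hVne
  refine (hholz c (hr (ball_subset_closedBall hc))).analyticOnNhd hU
    |>.eqOn_of_preconnected_of_eventuallyEq ((hcauchy.const_smul _).analyticOnNhd hU) hUc (hVU hv)
    (eventually_of_mem (hV.mem_nhds hv) fun z hz => ?_)
  change G c z = (2 * π * I : ℂ)⁻¹ • ∮ ζ in C(c₀, r), (ζ - c)⁻¹ • G ζ z
  rw [((hholc z hz).mono hr).circleIntegral_sub_inv_smul hc, smul_smul,
    inv_mul_cancel₀ (by simp [pi_ne_zero]), one_smul]

theorem differentiableOn_left_of_isPreconnected (hD : IsOpen D) (hU : IsOpen U)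
    (hUc : IsPreconnected U) (hV : IsOpen V) (hVne : V.Nonempty) (hVU : V ⊆ U)
    (hcont : ContinuousOn (uncurry G) (D ×ˢ U)) (hholz : ∀ c ∈ D, DifferentiableOn ℂ (G c) U)
    (hholc : ∀ z ∈ V, DifferentiableOn ℂ (G · z) D) :
    ∀ z ∈ U, DifferentiableOn ℂ (G · z) D := by
  intro z hz c₀ hc₀
  obtain ⟨r, hr, hrD⟩ := nhds_basis_closedBall.mem_iff.1 (hD.mem_nhds hc₀)
  have hGz : ContinuousOn (G · z) (sphere c₀ r) :=
    hcont.comp (f := fun c => (c, z)) (Continuous.continuousOn (by fun_prop))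
      fun c hc => ⟨hrD (sphere_subset_closedBall hc), hz⟩
  have hlocal : (G · z) =ᶠ[𝓝 c₀]
      fun c => (2 * π * I : ℂ)⁻¹ • ∮ ζ in C(c₀, r), (ζ - c)⁻¹ • G ζ z :=
    eventually_of_mem (ball_mem_nhds c₀ hr) fun c hc =>
      eqOn_cauchyIntegral_of_isPreconnected hU hUc hV hVne hVU hcont hholz hholc hrD hc hz
  exact ((differentiableOn_cauchyIntegral (hGz.circleIntegrable hr.le) hr).differentiableAt
    (ball_mem_nhds c₀ hr)).congr_of_eventuallyEq hlocal |>.differentiableWithinAt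

end

theorem stmt17 (U V : Set ℂ) (hU : IsOpen U) (hUc : IsConnected U)
    (hV : IsOpen V) (hVne : V.Nonempty) (hVU : V ⊆ U)
    (D : Set ℂ) (hD : D = Metric.ball (0 : ℂ) 1)
    (G : ℂ → ℂ → ℂ)
    (hcont : ContinuousOn (fun p : ℂ × ℂ => G p.1 p.2) (D ×ˢ U))
    (hholz : ∀ c ∈ D, DifferentiableOn ℂ (G c) U)
    (hholc : ∀ z ∈ V, DifferentiableOn ℂ (fun c => G c z) D) :
    ∀ z ∈ U, DifferentiableOn ℂ (fun c => G c z) D :=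
  differentiableOn_left_of_isPreconnected (hD ▸ isOpen_ball) hU hUc.isPreconnected hV hVne hVU
    hcont hholz hholc
end
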